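/- For every integer n ≥ 1, n is a power of 2 (including n = 1) if and only if ⟨⟨n⟩⟩_2 = ab. -/
import Mathlib


open scoped Classical symmDiff

/-- The set `D_n` of positive divisors of `n`, viewed inside `ℝ`. -/
noncomputable def divisorsR (n : ℕ) : Finset ℝ :=
  n.divisors.image (fun d => (d : ℝ))

/-- The set `λ·D_n = {λd : d ∣ n}`, viewed inside `ℝ`. -/
noncomputable def lamDivisorsR (l : ℝ) (n : ℕ) : Finset ℝ :=
  n.divisors.image (fun d => l * (d : ℝ))

/-- The word `⟨⟨n⟩⟩_λ` over the alphabet `{a, b}`, encoded with `true = a` and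
`false = b`: list the elements of the symmetric difference `D_n ∆ λD_n` in
increasing order, writing `a` for elements of `D_n \ λD_n` and `b` for
elements of `λD_n \ D_n`. -/
noncomputable def krWord (l : ℝ) (n : ℕ) : List Bool :=
  ((divisorsR n ∆ lamDivisorsR l n).sort (· ≤ ·)).map (fun x => decide (x ∈ divisorsR n))

/-- A Dyck word (`true = a`, `false = b`): every prefix has at least as many
`a`'s as `b`'s, and the whole word has equally many `a`'s and `b`'s. -/
def IsDyck (w : List Bool) : Prop :=
  (∀ p : List Bool, p <+: w → p.count false ≤ p.count true) ∧
    w.count true = w.count false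

/-- The number of centered tunnels of a word `w` of length `2m`:
the number of (0-indexed) `i < m` such that `w_i = a`, `w_{2m-1-i} = b`, and the
factor strictly between these two positions is a Dyck word. -/
noncomputable def ct (w : List Bool) : ℕ :=
  ((Finset.range (w.length / 2)).filter (fun i =>
    w.getD i false = true ∧ w.getD (w.length - 1 - i) true = false ∧
      IsDyck ((w.drop (i + 1)).take (w.length - 2 * (i + 1))))).card

/-- `Omega w`: the number of irreducible factors of the Dyck word `w`, i.e. the
number of nonempty prefixes of `w` that are Dyck words (returns to height 0). -/
noncomputable def Omega (w : List Bool) : ℕ :=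
  ((Finset.range w.length).filter (fun i => IsDyck (w.take (i + 1)))).card

/-- `blocksCount l n`: the number of connected components of `⋃_{d ∣ n} [d, l·d] ⊆ ℝ`. -/
noncomputable def blocksCount (l : ℝ) (n : ℕ) : ℕ :=
  Nat.card (ConnectedComponents (↥(⋃ d ∈ n.divisors, Set.Icc (d : ℝ) (l * d))))

/-- `middleCount l n`: the number of divisors `d` of `n` with `√(n/l) < d ≤ √(l·n)`. -/
noncomputable def middleCount (l : ℝ) (n : ℕ) : ℕ :=
  (n.divisors.filter (fun d => Real.sqrt (n / l) < (d : ℝ) ∧ (d : ℝ) ≤ Real.sqrt (l * n))).card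

/-- The height of a word: the maximum over all prefixes of (#a − #b). -/
def wordHeight (w : List Bool) : ℕ :=
  (Finset.range (w.length + 1)).sup (fun i => (w.take i).count true - (w.take i).count false)

/-- `ellAB w` for a word of length `2m`: the number of (0-indexed) `i < m`
with `w_i = a` and `w_{2m-1-i} = b`. -/
def ellAB (w : List Bool) : ℕ :=
  ((Finset.range (w.length / 2)).filter (fun i =>
    w.getD i false = true ∧ w.getD (w.length - 1 - i) true = false)).card

/-- `n` is the semi-perimeter of a Pythagorean triangle. -/
def IsPythSemiPerimeter (n : ℕ) : Prop :=
  ∃ x y z : ℕ, 0 < x ∧ 0 < y ∧ 0 < z ∧ x ^ 2 + y ^ 2 = z ^ 2 ∧ x + y + z = 2 * n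

/-- `n` is even-trapezoidal: it admits a partition into an even number of
consecutive parts. -/
def IsEvenTrapezoidal (n : ℕ) : Prop :=
  ∃ a m : ℕ, 1 ≤ a ∧ 1 ≤ m ∧ n = ∑ k ∈ Finset.range (2 * m), (a + k)

lemma mem_divisorsR' {n : ℕ} {x : ℝ} : x ∈ divisorsR n ↔ ∃ d ∈ n.divisors, (d : ℝ) = x := by
  simp [divisorsR]

lemma mem_lamDivisorsR' {n : ℕ} {x : ℝ} :
    x ∈ lamDivisorsR 2 n ↔ ∃ d ∈ n.divisors, 2 * (d : ℝ) = x := by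
  simp [lamDivisorsR]

lemma one_notMem_lam {n : ℕ} : (1 : ℝ) ∉ lamDivisorsR 2 n := by
  rw [mem_lamDivisorsR']
  rintro ⟨d, hd, h⟩
  have hd1 : 1 ≤ d := (Nat.pos_of_mem_divisors hd)
  have : (2 : ℝ) ≤ 2 * (d : ℝ) := by
    have : (1 : ℝ) ≤ (d : ℝ) := by exact_mod_cast hd1
    nlinarith
  linarith [h ▸ this]

lemma two_n_notMem_div {n : ℕ} (hn : 1 ≤ n) : ((2 * n : ℕ) : ℝ) ∉ divisorsR n := by
  rw [mem_divisorsR']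
  rintro ⟨d, hd, h⟩
  have hdn : d ≤ n := Nat.le_of_dvd hn (Nat.mem_divisors.mp hd).1
  have : d = 2 * n := by exact_mod_cast h
  omega

lemma one_mem_sd {n : ℕ} (hn : 1 ≤ n) : (1 : ℝ) ∈ divisorsR n ∆ lamDivisorsR 2 n := by
  rw [Finset.mem_symmDiff]
  left
  refine ⟨?_, one_notMem_lam⟩
  rw [mem_divisorsR']
  exact ⟨1, Nat.one_mem_divisors.mpr (by omega), by norm_num⟩

lemma two_n_mem_sd {n : ℕ} (hn : 1 ≤ n) :
    ((2 * n : ℕ) : ℝ) ∈ divisorsR n ∆ lamDivisorsR 2 n := by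
  rw [Finset.mem_symmDiff]
  right
  refine ⟨?_, two_n_notMem_div hn⟩
  rw [mem_lamDivisorsR']
  exact ⟨n, Nat.mem_divisors_self n (by omega), by push_cast; ring⟩

lemma sort_pair_real {a b : ℝ} (h : a < b) :
    ({a, b} : Finset ℝ).sort (· ≤ ·) = [a, b] := by
  rw [Finset.sort_insert (r := (· ≤ ·)) (by simpa using h.le) (by simp [h.ne]),
    Finset.sort_singleton]

/-- `n` is a power of 2 iff `⟨⟨n⟩⟩₂ = ab`. -/
theorem pow_two_iff_krWord_eq_ab (n : ℕ) (hn : 1 ≤ n) :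
    (∃ m : ℕ, n = 2 ^ m) ↔ krWord 2 n = [true, false] := by
  have hone : (1 : ℝ) < ((2 * n : ℕ) : ℝ) := by
    have : (2 : ℕ) ≤ 2 * n := by omega
    exact_mod_cast by omega
  constructor
  · rintro ⟨m, rfl⟩
    have hS : divisorsR (2 ^ m) ∆ lamDivisorsR 2 (2 ^ m) =
        {(1 : ℝ), ((2 * 2 ^ m : ℕ) : ℝ)} := by
      apply Finset.Subset.antisymm
      · intro x hx
        rw [Finset.mem_symmDiff] at hx
        rcases hx with ⟨hx1, hx2⟩ | ⟨hx1, hx2⟩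
        · rw [mem_divisorsR'] at hx1
          obtain ⟨d, hd, rfl⟩ := hx1
          obtain ⟨i, hi, rfl⟩ := (Nat.dvd_prime_pow Nat.prime_two).mp (Nat.mem_divisors.mp hd).1
          rcases Nat.eq_zero_or_pos i with rfl | hipos
          · simp
          · exfalso
            apply hx2
            rw [mem_lamDivisorsR']
            refine ⟨2 ^ (i - 1), Nat.mem_divisors.mpr ⟨pow_dvd_pow 2 (by omega), by positivity⟩, ?_⟩
            have : (2 : ℕ) ^ i = 2 * 2 ^ (i - 1) := by
              rw [← pow_succ']
              congr 1
              omega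
            rw [this]
            push_cast
            ring
        · rw [mem_lamDivisorsR'] at hx1
          obtain ⟨d, hd, rfl⟩ := hx1
          obtain ⟨i, hi, rfl⟩ := (Nat.dvd_prime_pow Nat.prime_two).mp (Nat.mem_divisors.mp hd).1
          rcases eq_or_lt_of_le hi with rfl | hilt
          · simp only [Finset.mem_insert, Finset.mem_singleton]
            right
            push_cast
            ring
          · exfalso
            apply hx2
            rw [mem_divisorsR']
            refine ⟨2 ^ (i + 1), Nat.mem_divisors.mpr ⟨pow_dvd_pow 2 (by omega), by positivity⟩, ?_⟩
            push_cast
            ring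
      · intro x hx
        simp only [Finset.mem_insert, Finset.mem_singleton] at hx
        rcases hx with rfl | rfl
        · exact one_mem_sd hn
        · exact two_n_mem_sd hn
    unfold krWord
    rw [hS, sort_pair_real hone]
    simp only [List.map_cons, List.map_nil]
    congr 1
    · rw [decide_eq_true_iff]
      rw [mem_divisorsR']
      exact ⟨1, Nat.one_mem_divisors.mpr (by positivity), by norm_num⟩
    · congr 1
      rw [decide_eq_false_iff_not]
      exact two_n_notMem_div hn
  · intro hw
    -- card of symm diff is 2
    have hlen : ((divisorsR n ∆ lamDivisorsR 2 n).sort (· ≤ ·)).length = 2 := by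
      have := congrArg List.length hw
      simpa [krWord] using this
    have hcard : (divisorsR n ∆ lamDivisorsR 2 n).card = 2 := by
      rw [← Finset.length_sort (· ≤ ·)]; exact hlen
    have hsub : ({(1 : ℝ), ((2 * n : ℕ) : ℝ)} : Finset ℝ) ⊆ divisorsR n ∆ lamDivisorsR 2 n := by
      intro x hx
      simp only [Finset.mem_insert, Finset.mem_singleton] at hx
      rcases hx with rfl | rfl
      · exact one_mem_sd hn
      · exact two_n_mem_sd hn
    have hScard : ({(1 : ℝ), ((2 * n : ℕ) : ℝ)} : Finset ℝ).card = 2 := by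
      rw [Finset.card_insert_of_notMem (by simpa using hone.ne), Finset.card_singleton]
    have hS : divisorsR n ∆ lamDivisorsR 2 n = {(1 : ℝ), ((2 * n : ℕ) : ℝ)} :=
      (Finset.eq_of_subset_of_card_le hsub (by omega)).symm
    -- every divisor > 1 is even
    have hdiv : ∀ d : ℕ, d ∣ n → 1 < d → 2 ∣ d := by
      intro d hd hd1
      by_contra hodd
      have hdD : (d : ℝ) ∈ divisorsR n := by
        rw [mem_divisorsR']
        exact ⟨d, Nat.mem_divisors.mpr ⟨hd, by omega⟩, rfl⟩
      have hdT : (d : ℝ) ∉ lamDivisorsR 2 n := by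
        rw [mem_lamDivisorsR']
        rintro ⟨e, he, hde⟩
        have : d = 2 * e := by exact_mod_cast hde.symm
        exact hodd ⟨e, this⟩
      have : (d : ℝ) ∈ divisorsR n ∆ lamDivisorsR 2 n := by
        rw [Finset.mem_symmDiff]; left; exact ⟨hdD, hdT⟩
      rw [hS] at this
      simp only [Finset.mem_insert, Finset.mem_singleton] at this
      rcases this with h | h
      · have : d = 1 := by exact_mod_cast h
        omega
      · have : d = 2 * n := by exact_mod_cast h
        have : d ≤ n := Nat.le_of_dvd (by omega) hd
        omega
    refine ⟨n.factorization 2, ?_⟩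
    have hn0 : n ≠ 0 := by omega
    have hcompl : (n / 2 ^ n.factorization 2) ∣ n := Nat.ordCompl_dvd n 2
    have hcpos : 0 < (n / 2 ^ n.factorization 2) := Nat.ordCompl_pos 2 hn0
    have hnd : ¬ 2 ∣ (n / 2 ^ n.factorization 2) := Nat.not_dvd_ordCompl Nat.prime_two hn0
    have h1 : (n / 2 ^ n.factorization 2) = 1 := by
      by_contra h
      exact hnd (hdiv _ hcompl (by omega))
    have := Nat.ordProj_mul_ordCompl_eq_self n 2
    rw [h1, mul_one] at this
    omega
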